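/- Let B > 0 and let ν : (0,∞) → [0,∞) be nondecreasing, right-continuous, and identically 0 on (0,B). Let μ_ν and μ_{⌊ν⌋} denote the Lebesgue–Stieltjes measures on (0,∞) associated with ν and with t ↦ ⌊ν(t)⌋ respectively. Let z = x + iy ∈ ℂ with y ≠ 0, and assume t ↦ log|1 − z²/t²| is integrable on (0,∞) with respect to both μ_ν and μ_{⌊ν⌋}. Then, setting I = ∫_0^∞ log|1 − z²/t²| dμ_{⌊ν⌋}(t) − ∫_0^∞ log|1 − z²/t²| dμ_ν(t), one has −log⁺(|x|/|y|) − log⁺((x² + y²)/B²) − log 2 ≤ I ≤ log⁺(|x|/|y|). -/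

import Mathlib

open MeasureTheory Set Real
open scoped ENNReal NNReal

/-- Upward closure of superlevel sets of the quadratic `q v = r v² - 2 a v + 1` above `c ≥ 1`. -/
lemma atpe_q_up {r a c v w : ℝ} (hr : 0 ≤ r) (hv : 0 ≤ v) (hvw : v ≤ w)
    (hc : 1 ≤ c) (hqv : c < r*v^2 - 2*a*v + 1) : c < r*w^2 - 2*a*w + 1 := by
  rcases eq_or_lt_of_le (hv.trans hvw) with hw0 | hw0
  · have hv0 : v = 0 := le_antisymm (hvw.trans hw0.symm.le) hv
    rw [← hw0]; rw [hv0] at hqv; nlinarith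
  by_contra h
  push_neg at h
  nlinarith [mul_nonneg hv (sub_nonneg.2 h), mul_nonneg (sub_nonneg.2 hvw) (sub_nonneg.2 hc),
    mul_nonneg (mul_nonneg (mul_nonneg hr hv) hw0.le) (sub_nonneg.2 hvw),
    mul_pos hw0 (sub_pos.2 hqv)]

/-- Order convexity of sublevel sets of the quadratic. -/
lemma atpe_q_conv {r a c v v₁ v₂ : ℝ} (hr : 0 ≤ r) (h1 : v₁ ≤ v) (h2 : v ≤ v₂)
    (hq1 : r*v₁^2 - 2*a*v₁ + 1 < c) (hq2 : r*v₂^2 - 2*a*v₂ + 1 < c) :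
    r*v^2 - 2*a*v + 1 < c := by
  rcases eq_or_lt_of_le h1 with rfl | h1'
  · exact hq1
  have h12 : v₁ < v₂ := h1'.trans_le h2
  nlinarith [mul_nonneg (sub_nonneg.2 h2) (sub_pos.2 hq1).le,
    mul_pos (sub_pos.2 h1') (sub_pos.2 hq2),
    mul_nonneg (mul_nonneg (mul_nonneg hr (sub_nonneg.2 h2)) (sub_pos.2 h1').le)
      (sub_pos.2 h12).le]

lemma atpe_ofReal_le {u w : ℝ} (h : u ≤ w + 1) : ENNReal.ofReal u ≤ ENNReal.ofReal w + 1 := by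
  calc ENNReal.ofReal u ≤ ENNReal.ofReal (w + 1) := ENNReal.ofReal_le_ofReal h
    _ ≤ ENNReal.ofReal w + ENNReal.ofReal 1 := ENNReal.ofReal_add_le
    _ = ENNReal.ofReal w + 1 := by rw [ENNReal.ofReal_one]

lemma atpe_abs_sq (z : ℂ) (t : ℝ) (ht : t ≠ 0) :
    (‖1 - z^2/(t:ℂ)^2‖)^2
      = (z.re^2+z.im^2)^2 * (1/t^2)^2 - 2*(z.re^2-z.im^2)*(1/t^2) + 1 := by
  rw [Complex.sq_norm, Complex.normSq_apply]
  have h : ((t:ℂ))^2 = ((t^2 : ℝ) : ℂ) := by push_cast; ring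
  rw [h]
  simp only [Complex.sub_re, Complex.sub_im, Complex.one_re, Complex.one_im,
    Complex.div_ofReal_re, Complex.div_ofReal_im, pow_two, Complex.mul_re, Complex.mul_im]
  have ht2 : (t*t) ≠ 0 := mul_ne_zero ht ht
  field_simp
  ring

lemma atpe_q_min (x y v : ℝ) (hy : y ≠ 0) (hv : 0 ≤ v) :
    Real.exp (-(2 * max (Real.log (|x|/|y|)) 0))
      ≤ (x^2+y^2)^2*v^2 - 2*(x^2-y^2)*v + 1 := by
  set L := max (Real.log (|x|/|y|)) 0 with hL
  set m := max (|x|/|y|) 1 with hm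
  have hm1 : 1 ≤ m := le_max_right _ _
  have hexp : Real.exp L = m := by
    rcases le_or_gt (|x|/|y|) 1 with h | h
    · have hlog : Real.log (|x|/|y|) ≤ 0 := by
        rcases eq_or_lt_of_le (abs_nonneg x) with h0 | h0
        · rw [← h0]; simp
        · exact Real.log_nonpos (by positivity) h
      rw [hL, max_eq_right hlog, Real.exp_zero, hm, max_eq_right h]
    · have hlog : 0 < Real.log (|x|/|y|) := Real.log_pos h
      rw [hL, max_eq_left hlog.le, Real.exp_log (lt_trans one_pos h), hm,
        max_eq_left h.le]
  have hexp2 : Real.exp (-(2*L)) = m⁻¹ * m⁻¹ := by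
    rw [show -(2*L) = -L + -L by ring, Real.exp_add, Real.exp_neg, hexp]
  rw [hexp2]
  have hmpos : 0 < m := lt_of_lt_of_le one_pos hm1
  rcases le_or_gt (|x|/|y|) 1 with h | h
  · have hm' : m = 1 := max_eq_right h
    rw [hm']
    have hxy : x^2 ≤ y^2 := by
      have := (div_le_one (by positivity : (0:ℝ) < |y|)).1 h
      nlinarith [sq_abs x, sq_abs y, abs_nonneg x, abs_nonneg y]
    nlinarith [sq_nonneg ((x^2+y^2)*v), sq_nonneg v, hv]
  · have hm' : m = |x|/|y| := max_eq_left h.le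
    have hyx : y^2 < x^2 := by
      have h' : |y| < |x| := by
        rwa [one_lt_div (abs_pos.2 hy)] at h
      nlinarith [sq_abs x, sq_abs y, abs_nonneg y]
    have hx0 : x ≠ 0 := by intro h0; rw [h0] at hyx; nlinarith [sq_nonneg y]
    have hm2 : m⁻¹ * m⁻¹ = y^2 / x^2 := by
      rw [hm']
      rw [← sq_abs x, ← sq_abs y]
      field_simp
    rw [hm2, div_le_iff₀ (by positivity : (0:ℝ) < x^2)]
    have hr2 : (0:ℝ) < (x^2+y^2)^2 := by positivity
    rw [← mul_le_mul_iff_right₀ hr2]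
    nlinarith [mul_nonneg (sq_nonneg x) (sq_nonneg ((x^2+y^2)^2*v - (x^2-y^2))),
      mul_nonneg (mul_nonneg (sq_nonneg y) (sub_nonneg.2 hyx.le))
        (by positivity : (0:ℝ) ≤ 3*x^2+y^2)]

lemma atpe_layer (μ : Measure ℝ) (f : ℝ → ℝ) (hfm : Measurable f)
    (hint : IntegrableOn f (Ioi 0) μ) :
    (∫ t in Ioi (0:ℝ), f t ∂μ)
      = (∫⁻ l in Ioi (0:ℝ), μ ({t | l < f t} ∩ Ioi 0)).toReal
        - (∫⁻ l in Ioi (0:ℝ), μ ({t | f t < -l} ∩ Ioi 0)).toReal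
      ∧ (∫⁻ l in Ioi (0:ℝ), μ ({t | l < f t} ∩ Ioi 0)) ≠ ⊤
      ∧ (∫⁻ l in Ioi (0:ℝ), μ ({t | f t < -l} ∩ Ioi 0)) ≠ ⊤ := by
  set μ' := μ.restrict (Ioi 0) with hμ'
  have key : ∀ g : ℝ → ℝ, Measurable g →
      ∫⁻ a, ENNReal.ofReal (g a) ∂μ' = ∫⁻ l in Ioi (0:ℝ), μ ({t | l < g t} ∩ Ioi 0) := by
    intro g hgm
    have h1 : ∫⁻ a, ENNReal.ofReal (g a) ∂μ' = ∫⁻ a, ENNReal.ofReal (max (g a) 0) ∂μ' := by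
      apply lintegral_congr
      intro a
      rcases le_total (g a) 0 with h | h
      · rw [max_eq_right h, ENNReal.ofReal_eq_zero.2 h, ENNReal.ofReal_zero]
      · rw [max_eq_left h]
    have h2 := lintegral_eq_lintegral_meas_lt μ' (f := fun a => max (g a) 0)
      (ae_of_all _ fun a => le_max_right _ _) (hgm.max measurable_const).aemeasurable
    rw [h1, h2]
    apply setLIntegral_congr_fun measurableSet_Ioi
    intro l hl
    have hset : {a : ℝ | l < max (g a) 0} = {t : ℝ | l < g t} := by
      ext a
      simp only [mem_setOf_eq, lt_max_iff]
      exact ⟨fun h => h.resolve_right (fun h' => absurd hl (not_lt.2 h'.le)), Or.inl⟩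
    dsimp only
    rw [hset, hμ', Measure.restrict_apply (measurableSet_lt measurable_const hgm)]
  have fin : ∀ g : ℝ → ℝ, Measurable g → (∀ a, |g a| = |f a|) →
      ∫⁻ a, ENNReal.ofReal (g a) ∂μ' ≠ ⊤ := by
    intro g hgm habs
    have hb : ∀ a, ENNReal.ofReal (g a) ≤ ‖f a‖ₑ := by
      intro a
      rw [Real.enorm_eq_ofReal_abs, ← habs a]
      exact ENNReal.ofReal_le_ofReal (le_abs_self _)
    exact ne_top_of_le_ne_top hint.hasFiniteIntegral.ne (lintegral_mono hb)
  have hneg : ∀ l : ℝ, {t : ℝ | l < -f t} = {t : ℝ | f t < -l} := by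
    intro l; ext t; simp only [mem_setOf_eq, lt_neg]
  have hkeyneg : ∫⁻ a, ENNReal.ofReal (-f a) ∂μ'
      = ∫⁻ l in Ioi (0:ℝ), μ ({t | f t < -l} ∩ Ioi 0) := by
    have := key (fun t => -f t) hfm.neg
    simp only [hneg] at this
    exact this
  refine ⟨?_, ?_, ?_⟩
  · rw [integral_eq_lintegral_pos_part_sub_lintegral_neg_part hint, key f hfm, hkeyneg]
  · rw [← key f hfm]; exact fin f hfm (fun a => rfl)
  · rw [← hkeyneg]; exact fin _ hfm.neg (fun a => abs_neg _)

lemma atpe_downclosed_struct (S : Set ℝ) (hsub : S ⊆ Ioi 0)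
    (hdc : ∀ t ∈ S, ∀ u, 0 < u → u ≤ t → u ∈ S)
    (hbdd : ∃ M, ∀ t ∈ S, t ≤ M) :
    S = ∅ ∨ ∃ s, 0 < s ∧ (S = Ioo 0 s ∨ S = Ioc 0 s) := by
  by_cases hne : S.Nonempty
  · right
    obtain ⟨M, hM⟩ := hbdd
    have hba : BddAbove S := ⟨M, fun t ht => hM t ht⟩
    set s := sSup S with hs
    obtain ⟨t0, ht0⟩ := hne
    have hspos : 0 < s := lt_of_lt_of_le (hsub ht0) (le_csSup hba ht0)
    have hsub1 : Ioo 0 s ⊆ S := by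
      intro t ht
      obtain ⟨u, huS, htu⟩ := exists_lt_of_lt_csSup ⟨t0, ht0⟩ ht.2
      exact hdc u huS t ht.1 htu.le
    have hsub2 : S ⊆ Ioc 0 s := fun t ht => ⟨hsub ht, le_csSup hba ht⟩
    refine ⟨s, hspos, ?_⟩
    by_cases hsin : s ∈ S
    · right
      refine Subset.antisymm hsub2 (fun t ht => ?_)
      rcases eq_or_lt_of_le ht.2 with rfl | h
      · exact hsin
      · exact hsub1 ⟨ht.1, h⟩
    · left
      refine Subset.antisymm (fun t ht => ⟨hsub ht, ?_⟩) hsub1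
      rcases eq_or_lt_of_le (le_csSup hba ht) with rfl | h
      · exact absurd ht hsin
      · exact h
  · left; exact not_nonempty_iff_eq_empty.1 hne

lemma atpe_convex_struct (T : Set ℝ) (hsub : T ⊆ Ioi 0)
    (hconv : ∀ t₁ ∈ T, ∀ t₂ ∈ T, ∀ t, t₁ ≤ t → t ≤ t₂ → t ∈ T)
    (hbdd : ∃ M, ∀ t ∈ T, t ≤ M) :
    T = ∅ ∨ ∃ p s, p ≤ s ∧
      (T = Ioo p s ∨ T = Ico p s ∨ T = Ioc p s ∨ T = Icc p s) := by
  by_cases hne : T.Nonempty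
  · right
    obtain ⟨M, hM⟩ := hbdd
    have hba : BddAbove T := ⟨M, fun t ht => hM t ht⟩
    have hbb : BddBelow T := ⟨0, fun t ht => (hsub ht).le⟩
    set p := sInf T with hp
    set s := sSup T with hs
    have hps : p ≤ s := csInf_le_csSup hne hbb hba
    have hIoo : Ioo p s ⊆ T := by
      intro t ht
      obtain ⟨u1, hu1, h1⟩ := exists_lt_of_csInf_lt hne ht.1
      obtain ⟨u2, hu2, h2⟩ := exists_lt_of_lt_csSup hne ht.2
      exact hconv u1 hu1 u2 hu2 t h1.le h2.le
    have hIcc : T ⊆ Icc p s := fun t ht => ⟨csInf_le hbb ht, le_csSup hba ht⟩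
    refine ⟨p, s, hps, ?_⟩
    by_cases hpin : p ∈ T <;> by_cases hsin : s ∈ T
    · right; right; right
      refine Subset.antisymm hIcc (fun t ht => ?_)
      rcases eq_or_lt_of_le ht.1 with rfl | h1
      · exact hpin
      rcases eq_or_lt_of_le ht.2 with rfl | h2
      · exact hsin
      exact hIoo ⟨h1, h2⟩
    · right; left
      refine Subset.antisymm (fun t ht => ⟨csInf_le hbb ht, ?_⟩) (fun t ht => ?_)
      · rcases eq_or_lt_of_le (le_csSup hba ht) with rfl | h
        · exact absurd ht hsin
        · exact h
      · rcases eq_or_lt_of_le ht.1 with rfl | h1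
        · exact hpin
        · exact hIoo ⟨h1, ht.2⟩
    · right; right; left
      refine Subset.antisymm (fun t ht => ⟨?_, le_csSup hba ht⟩) (fun t ht => ?_)
      · rcases eq_or_lt_of_le (csInf_le hbb ht) with rfl | h
        · exact absurd ht hpin
        · exact h
      · rcases eq_or_lt_of_le ht.2 with rfl | h2
        · exact hsin
        · exact hIoo ⟨ht.1, h2⟩
    · left
      refine Subset.antisymm (fun t ht => ⟨?_, ?_⟩) hIoo
      · rcases eq_or_lt_of_le (csInf_le hbb ht) with rfl | h
        · exact absurd ht hpin
        · exact h
      · rcases eq_or_lt_of_le (le_csSup hba ht) with rfl | h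
        · exact absurd ht hsin
        · exact h
  · left; exact not_nonempty_iff_eq_empty.1 hne

set_option maxHeartbeats 1000000 in
/-- **Koosis-type lemma: atomizing a measure changes the logarithmic potential by at most
logarithmic terms.**  Let `ν` be a nondecreasing right-continuous function vanishing on
`(-∞, B)` (in particular on `(0,B)`), `νf = ⌊ν⌋` its integer part, and let `μ_ν`, `μ_{⌊ν⌋}`
be the associated Lebesgue–Stieltjes measures.  For `z = x + iy` with `y ≠ 0`, if
`t ↦ log|1 - z²/t²|` is integrable on `(0,∞)` for both measures, then the difference `I`
of the two potentials satisfies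
`-log⁺(|x|/|y|) - log⁺((x²+y²)/B²) - log 2 ≤ I ≤ log⁺(|x|/|y|)`. -/
theorem atomization_potential_estimate
    (B : ℝ) (hB : 0 < B)
    (ν νf : StieltjesFunction ℝ)
    (hν0 : ∀ t : ℝ, t < B → ν t = 0)
    (hfloor : ∀ t : ℝ, νf t = (⌊ν t⌋ : ℝ))
    (z : ℂ) (hz : z.im ≠ 0)
    (h1 : IntegrableOn (fun t : ℝ => Real.log (‖1 - z^2 / (t:ℂ)^2‖))
        (Ioi 0) ν.measure)
    (h2 : IntegrableOn (fun t : ℝ => Real.log (‖1 - z^2 / (t:ℂ)^2‖))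
        (Ioi 0) νf.measure) :
    -max (Real.log (|z.re| / |z.im|)) 0 - max (Real.log ((z.re^2 + z.im^2) / B^2)) 0
        - Real.log 2
      ≤ (∫ t in Ioi (0:ℝ), Real.log (‖1 - z^2 / (t:ℂ)^2‖) ∂νf.measure)
        - (∫ t in Ioi (0:ℝ), Real.log (‖1 - z^2 / (t:ℂ)^2‖) ∂ν.measure) ∧
    (∫ t in Ioi (0:ℝ), Real.log (‖1 - z^2 / (t:ℂ)^2‖) ∂νf.measure)
        - (∫ t in Ioi (0:ℝ), Real.log (‖1 - z^2 / (t:ℂ)^2‖) ∂ν.measure)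
      ≤ max (Real.log (|z.re| / |z.im|)) 0 := by
  have hfm : Measurable (fun t : ℝ => Real.log (‖1 - z^2 / (t:ℂ)^2‖)) := by
    have hfeq : (fun t : ℝ => Real.log (‖1 - z^2 / (t:ℂ)^2‖)) = fun t : ℝ =>
        Real.log (‖1 - z^2 * ((((t^2)⁻¹ : ℝ)) : ℂ)‖) := by
      funext t
      congr 2
      rw [div_eq_mul_inv, ← Complex.ofReal_pow, ← Complex.ofReal_inv]
    rw [hfeq]
    exact Real.measurable_log.comp (continuous_norm.measurable.comp
      (measurable_const.sub
        ((Complex.measurable_ofReal.comp ((measurable_id.pow_const 2).inv)).const_mul (z^2))))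
  set x : ℝ := z.re with hxdef
  set y : ℝ := z.im with hydef
  have hy : y ≠ 0 := hz
  set f : ℝ → ℝ := fun t : ℝ => Real.log (‖1 - z^2 / (t:ℂ)^2‖) with hfdef
  set Q : ℝ → ℝ := fun v => (x^2+y^2)^2*v^2 - 2*(x^2-y^2)*v + 1 with hQdef
  set L1 : ℝ := max (Real.log (|x| / |y|)) 0 with hL1def
  have hL1nn : 0 ≤ L1 := le_max_right _ _
  -- the quadratic bridge
  have habs_sq : ∀ t : ℝ, t ≠ 0 →
      (‖1 - z^2/(t:ℂ)^2‖)^2 = Q (1/t^2) := by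
    intro t ht
    simp only [hQdef]
    exact atpe_abs_sq z t ht
  have hQmin : ∀ v : ℝ, 0 ≤ v → Real.exp (-(2*L1)) ≤ Q v := by
    intro v hv
    simp only [hQdef, hL1def]
    exact atpe_q_min x y v hy hv
  have habs_pos : ∀ t : ℝ, 0 < t → 0 < ‖1 - z^2/(t:ℂ)^2‖ := by
    intro t ht
    have h := hQmin (1/t^2) (by positivity)
    rw [← habs_sq t ht.ne'] at h
    nlinarith [Real.exp_pos (-(2*L1)), norm_nonneg (1 - z^2/(t:ℂ)^2)]
  -- level set descriptions
  have hiff_gt : ∀ l t : ℝ, 0 < t → (l < f t ↔ Real.exp (2*l) < Q (1/t^2)) := by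
    intro l t ht
    have hA := habs_pos t ht
    simp only [hfdef]
    rw [Real.lt_log_iff_exp_lt hA]
    constructor
    · intro h
      have h2 : Real.exp l * Real.exp l
          < ‖1 - z^2/(t:ℂ)^2‖ * ‖1 - z^2/(t:ℂ)^2‖ :=
        mul_self_lt_mul_self (Real.exp_pos l).le h
      have h3 := habs_sq t ht.ne'
      rw [show (2:ℝ)*l = l + l by ring, Real.exp_add]
      nlinarith [h2, h3]
    · intro h
      have h3 := habs_sq t ht.ne'
      refine lt_of_pow_lt_pow_left₀ 2 (norm_nonneg _) ?_
      rw [h3]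
      rw [show (2:ℝ)*l = l + l by ring, Real.exp_add] at h
      nlinarith [h]
  have hiff_lt : ∀ l t : ℝ, 0 < t → (f t < -l ↔ Q (1/t^2) < Real.exp (-(2*l))) := by
    intro l t ht
    have hA := habs_pos t ht
    simp only [hfdef]
    rw [Real.log_lt_iff_lt_exp hA]
    constructor
    · intro h
      have h2 : ‖1 - z^2/(t:ℂ)^2‖ * ‖1 - z^2/(t:ℂ)^2‖
          < Real.exp (-l) * Real.exp (-l) :=
        mul_self_lt_mul_self (norm_nonneg _) h
      have h3 := habs_sq t ht.ne'
      rw [show -(2*l) = (-l) + (-l) by ring, Real.exp_add]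
      nlinarith [h2, h3]
    · intro h
      have h3 := habs_sq t ht.ne'
      refine lt_of_pow_lt_pow_left₀ 2 (Real.exp_pos (-l)).le ?_
      rw [h3]
      rw [show -(2*l) = (-l) + (-l) by ring, Real.exp_add] at h
      nlinarith [h]
  -- basic facts about ν and νf
  have hν00 : ν 0 = 0 := hν0 0 hB
  have hνf0 : νf 0 = 0 := by rw [hfloor, hν00]; simp
  have hle : ∀ t, νf t ≤ ν t := by
    intro t; rw [hfloor]; exact Int.floor_le _
  have hge1 : ∀ t, ν t ≤ νf t + 1 := by
    intro t; rw [hfloor]; exact (Int.lt_floor_add_one _).le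
  have hLL_le : ∀ t : ℝ, Function.leftLim νf t ≤ Function.leftLim ν t := by
    intro t
    exact le_of_tendsto_of_tendsto' (νf.mono.tendsto_leftLim t) (ν.mono.tendsto_leftLim t)
      (fun u => hle u)
  have hLL_ge : ∀ t : ℝ, Function.leftLim ν t ≤ Function.leftLim νf t + 1 := by
    intro t
    have h2 : Filter.Tendsto (fun u => νf u + 1) (nhdsWithin t (Iio t))
        (nhds (Function.leftLim νf t + 1)) := by
      exact (νf.mono.tendsto_leftLim t).add_const 1
    exact le_of_tendsto_of_tendsto' (ν.mono.tendsto_leftLim t) h2 (fun u => hge1 u)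
  have hllν : Function.leftLim ν B = 0 := by
    have h0 : Filter.Tendsto ν (nhdsWithin B (Iio B)) (nhds 0) := by
      apply Filter.Tendsto.congr' _ tendsto_const_nhds
      filter_upwards [self_mem_nhdsWithin] with u hu
      exact (hν0 u hu).symm
    exact tendsto_nhds_unique (ν.mono.tendsto_leftLim B) h0
  have hllνf : Function.leftLim νf B = 0 := by
    have h0 : Filter.Tendsto νf (nhdsWithin B (Iio B)) (nhds 0) := by
      apply Filter.Tendsto.congr' _ tendsto_const_nhds
      filter_upwards [self_mem_nhdsWithin] with u hu
      rw [hfloor, hν0 u hu]; simp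
    exact tendsto_nhds_unique (νf.mono.tendsto_leftLim B) h0
  -- tendsto at top
  have hQc : Continuous Q := by rw [hQdef]; fun_prop
  have htend : Filter.Tendsto (fun t : ℝ => Q (1/t^2)) Filter.atTop (nhds 1) := by
    have h0 : Filter.Tendsto (fun t : ℝ => 1/t^2) Filter.atTop (nhds 0) := by
      simpa [one_div, Pi.inv_def] using (Filter.tendsto_pow_atTop (two_ne_zero)).inv_tendsto_atTop
    have hQ0 : Q 0 = 1 := by simp [hQdef]
    have := (hQc.tendsto 0).comp h0
    rwa [hQ0] at this
  -- structure of the superlevel sets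
  have hS_struct : ∀ l : ℝ, 0 < l → ({t | l < f t} ∩ Ioi 0 = ∅ ∨
      ∃ s, 0 < s ∧ ({t | l < f t} ∩ Ioi 0 = Ioo 0 s ∨ {t | l < f t} ∩ Ioi 0 = Ioc 0 s)) := by
    intro l hl
    apply atpe_downclosed_struct _ inter_subset_right
    · intro t ht u hu hut
      refine ⟨?_, hu⟩
      have hq := (hiff_gt l t ht.2).1 ht.1
      have hgoal : Real.exp (2*l) < Q (1/u^2) := by
        simp only [hQdef] at hq ⊢
        refine atpe_q_up (by positivity) (by positivity) ?_ ?_ hq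
        · exact one_div_le_one_div_of_le (pow_pos hu 2) (pow_le_pow_left₀ hu.le hut 2)
        · exact Real.one_le_exp_iff.2 (by linarith)
      exact (hiff_gt l u hu).2 hgoal
    · have hlt : 1 < Real.exp (2*l) := by
        rw [← Real.exp_zero]
        exact Real.exp_lt_exp.2 (by linarith)
      have hev := htend.eventually_lt_const hlt
      rw [Filter.eventually_atTop] at hev
      obtain ⟨M, hM⟩ := hev
      refine ⟨M, fun t ht => ?_⟩
      by_contra hc
      push_neg at hc
      exact absurd ((hiff_gt l t ht.2).1 ht.1) (not_lt.2 (hM t hc.le).le)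
  -- structure of the sublevel sets
  have hT_struct : ∀ l : ℝ, 0 < l → ({t | f t < -l} ∩ Ioi 0 = ∅ ∨
      ∃ p s, p ≤ s ∧ ({t | f t < -l} ∩ Ioi 0 = Ioo p s ∨ {t | f t < -l} ∩ Ioi 0 = Ico p s ∨
        {t | f t < -l} ∩ Ioi 0 = Ioc p s ∨ {t | f t < -l} ∩ Ioi 0 = Icc p s)) := by
    intro l hl
    apply atpe_convex_struct _ inter_subset_right
    · intro t1 ht1 t2 ht2 t h1t h2t
      have hq1 := (hiff_lt l t1 ht1.2).1 ht1.1
      have hq2 := (hiff_lt l t2 ht2.2).1 ht2.1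
      have htpos : 0 < t := lt_of_lt_of_le ht1.2 h1t
      refine ⟨?_, htpos⟩
      have hgoal : Q (1/t^2) < Real.exp (-(2*l)) := by
        simp only [hQdef] at hq1 hq2 ⊢
        refine atpe_q_conv (by positivity) ?_ ?_ hq2 hq1
        · exact one_div_le_one_div_of_le (pow_pos htpos 2) (pow_le_pow_left₀ htpos.le h2t 2)
        · exact one_div_le_one_div_of_le (pow_pos ht1.2 2) (pow_le_pow_left₀ ht1.2.le h1t 2)
      exact (hiff_lt l t htpos).2 hgoal
    · have hlt : Real.exp (-(2*l)) < 1 := Real.exp_lt_one_iff.2 (by linarith)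
      have hev := htend.eventually_const_lt hlt
      rw [Filter.eventually_atTop] at hev
      obtain ⟨M, hM⟩ := hev
      refine ⟨M, fun t ht => ?_⟩
      by_contra hc
      push_neg at hc
      exact absurd ((hiff_lt l t ht.2).1 ht.1) (not_lt.2 (hM t hc.le).le)
  -- measure comparison on superlevel sets
  have hc1 : ∀ l : ℝ, 0 < l →
      νf.measure ({t | l < f t} ∩ Ioi 0) ≤ ν.measure ({t | l < f t} ∩ Ioi 0) := by
    intro l hl
    rcases hS_struct l hl with h | ⟨s, hs, h | h⟩
    · rw [h]; simp
    · rw [h, ν.measure_Ioo, νf.measure_Ioo]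
      exact ENNReal.ofReal_le_ofReal (by linarith [hLL_le s, hνf0, hν00])
    · rw [h, ν.measure_Ioc, νf.measure_Ioc]
      exact ENNReal.ofReal_le_ofReal (by linarith [hle s, hνf0, hν00])
  have hc2 : ∀ l : ℝ, 0 < l →
      ν.measure ({t | l < f t} ∩ Ioi 0) ≤ νf.measure ({t | l < f t} ∩ Ioi 0) + 1 := by
    intro l hl
    rcases hS_struct l hl with h | ⟨s, hs, h | h⟩
    · rw [h]; simp
    · rw [h, ν.measure_Ioo, νf.measure_Ioo]
      exact atpe_ofReal_le (by linarith [hLL_ge s, hνf0, hν00])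
    · rw [h, ν.measure_Ioc, νf.measure_Ioc]
      exact atpe_ofReal_le (by linarith [hge1 s, hνf0, hν00])
  have hc3 : ∀ l : ℝ, 0 < l → f B ≤ l →
      ν.measure ({t | l < f t} ∩ Ioi 0) = 0 ∧ νf.measure ({t | l < f t} ∩ Ioi 0) = 0 := by
    intro l hl hfb
    have hsub : {t | l < f t} ∩ Ioi 0 ⊆ Ioo 0 B := by
      intro t ht
      refine ⟨ht.2, ?_⟩
      by_contra hc
      push_neg at hc
      have hq := (hiff_gt l t ht.2).1 ht.1
      have hqB : Q (1/B^2) ≤ Real.exp (2*l) := by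
        have hefB : Real.exp (f B) = ‖1 - z^2/(B:ℂ)^2‖ :=
          Real.exp_log (habs_pos B hB)
        have : Q (1/B^2) = Real.exp (f B) * Real.exp (f B) := by
          rw [hefB, ← habs_sq B hB.ne']; ring
        rw [this, show (2:ℝ)*l = l + l by ring, Real.exp_add]
        exact mul_le_mul (Real.exp_le_exp.2 hfb) (Real.exp_le_exp.2 hfb)
          (Real.exp_pos _).le (Real.exp_pos _).le
      have hup : Real.exp (2*l) < Q (1/B^2) := by
        simp only [hQdef] at hq ⊢
        refine atpe_q_up (by positivity) (by positivity) ?_ ?_ hq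
        · exact one_div_le_one_div_of_le (pow_pos hB 2) (pow_le_pow_left₀ hB.le hc 2)
        · exact Real.one_le_exp_iff.2 (by linarith)
      linarith
    constructor
    · apply measure_mono_null hsub
      rw [ν.measure_Ioo, hllν, hν00]; simp
    · apply measure_mono_null hsub
      rw [νf.measure_Ioo, hllνf, hνf0]; simp
  -- measure comparison on sublevel sets
  have hc4 : ∀ l : ℝ, 0 < l →
      νf.measure ({t | f t < -l} ∩ Ioi 0) ≤ ν.measure ({t | f t < -l} ∩ Ioi 0) + 1 ∧
      ν.measure ({t | f t < -l} ∩ Ioi 0) ≤ νf.measure ({t | f t < -l} ∩ Ioi 0) + 1 := by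
    intro l hl
    rcases hT_struct l hl with h | ⟨p, s, hps, h | h | h | h⟩
    · rw [h]; simp
    · rw [h, ν.measure_Ioo, νf.measure_Ioo]
      exact ⟨atpe_ofReal_le (by linarith [hLL_le s, hLL_ge s, hle p, hge1 p]),
        atpe_ofReal_le (by linarith [hLL_le s, hLL_ge s, hle p, hge1 p])⟩
    · rw [h, ν.measure_Ico, νf.measure_Ico]
      exact ⟨atpe_ofReal_le (by linarith [hLL_le s, hLL_ge s, hLL_le p, hLL_ge p]),
        atpe_ofReal_le (by linarith [hLL_le s, hLL_ge s, hLL_le p, hLL_ge p])⟩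
    · rw [h, ν.measure_Ioc, νf.measure_Ioc]
      exact ⟨atpe_ofReal_le (by linarith [hle s, hge1 s, hle p, hge1 p]),
        atpe_ofReal_le (by linarith [hle s, hge1 s, hle p, hge1 p])⟩
    · rw [h, ν.measure_Icc, νf.measure_Icc]
      exact ⟨atpe_ofReal_le (by linarith [hle s, hge1 s, hLL_le p, hLL_ge p]),
        atpe_ofReal_le (by linarith [hle s, hge1 s, hLL_le p, hLL_ge p])⟩
  have hc5 : ∀ l : ℝ, L1 ≤ l → {t | f t < -l} ∩ Ioi 0 = ∅ := by
    intro l hll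
    rw [eq_empty_iff_forall_notMem]
    intro t ht
    have hq := (hiff_lt l t ht.2).1 ht.1
    have h2 := hQmin (1/t^2) (by positivity)
    have h3 : Real.exp (-(2*l)) ≤ Real.exp (-(2*L1)) :=
      Real.exp_le_exp.2 (by linarith)
    linarith
  -- layer cake for both measures
  obtain ⟨hlay1, hfinA1, hfinB1⟩ := atpe_layer νf.measure f hfm h2
  obtain ⟨hlay2, hfinA2, hfinB2⟩ := atpe_layer ν.measure f hfm h1
  set KB : ℝ := max (f B) 0 with hKBdef
  have hKB0 : 0 ≤ KB := le_max_right _ _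
  have hr2pos : (0:ℝ) < x^2+y^2 := by
    have hy2 : 0 < y^2 := lt_of_le_of_ne (sq_nonneg y) (Ne.symm (pow_ne_zero 2 hy))
    nlinarith [sq_nonneg x]
  have hKBb : KB ≤ Real.log 2 + max (Real.log ((x^2+y^2)/B^2)) 0 := by
    have hA := habs_pos B hB
    have htri : ‖1 - z^2/(B:ℂ)^2‖ ≤ 1 + (x^2+y^2)/B^2 := by
      calc ‖1 - z^2/(B:ℂ)^2‖ = ‖1 - z^2/(B:ℂ)^2‖ := by
            rfl
        _ ≤ ‖(1:ℂ)‖ + ‖z^2/(B:ℂ)^2‖ := norm_sub_le _ _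
        _ = 1 + (x^2+y^2)/B^2 := by
            rw [norm_one, norm_div, norm_pow, norm_pow, Complex.norm_real,
              Real.norm_eq_abs, abs_of_pos hB, Complex.sq_norm,
              Complex.normSq_apply]
            rw [hxdef, hydef]
            ring_nf
    have hfB : f B ≤ Real.log (1 + (x^2+y^2)/B^2) := by
      simp only [hfdef]
      exact Real.log_le_log hA htri
    have hpos1 : (0:ℝ) < 1 + (x^2+y^2)/B^2 := by positivity
    have hdivpos : (0:ℝ) < (x^2+y^2)/B^2 := div_pos hr2pos (pow_pos hB 2)
    have hlogpos : 0 ≤ Real.log (1 + (x^2+y^2)/B^2) := Real.log_nonneg (by linarith)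
    have hKBle : KB ≤ Real.log (1 + (x^2+y^2)/B^2) := max_le hfB hlogpos
    rcases le_total ((x^2+y^2)/B^2) 1 with hcase | hcase
    · have hlog2 : Real.log (1 + (x^2+y^2)/B^2) ≤ Real.log 2 :=
        Real.log_le_log hpos1 (by linarith)
      have hmax0 : (0:ℝ) ≤ max (Real.log ((x^2+y^2)/B^2)) 0 := le_max_right _ _
      linarith
    · have h2' : 1 + (x^2+y^2)/B^2 ≤ 2*((x^2+y^2)/B^2) := by linarith
      have hql : Real.log (1 + (x^2+y^2)/B^2) ≤ Real.log (2*((x^2+y^2)/B^2)) :=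
        Real.log_le_log hpos1 h2'
      rw [Real.log_mul (by norm_num) (ne_of_gt hdivpos)] at hql
      have hmaxl : Real.log ((x^2+y^2)/B^2) ≤ max (Real.log ((x^2+y^2)/B^2)) 0 :=
        le_max_left _ _
      linarith
  have hind : ∀ c : ℝ, 0 ≤ c →
      ∫⁻ l in Ioi (0:ℝ), (Ioo (0:ℝ) c).indicator (fun _ => (1:ℝ≥0∞)) l
        = ENNReal.ofReal c := by
    intro c hc
    rw [lintegral_indicator measurableSet_Ioo, setLIntegral_one,
      Measure.restrict_apply measurableSet_Ioo,
      inter_eq_self_of_subset_left Ioo_subset_Ioi_self, Real.volume_Ioo, sub_zero]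
  have e1 : (∫⁻ l in Ioi (0:ℝ), νf.measure ({t | l < f t} ∩ Ioi 0))
      ≤ (∫⁻ l in Ioi (0:ℝ), ν.measure ({t | l < f t} ∩ Ioi 0)) :=
    lintegral_mono_ae ((ae_restrict_iff' measurableSet_Ioi).2
      (ae_of_all _ (fun l hl => hc1 l hl)))
  have e2 : (∫⁻ l in Ioi (0:ℝ), ν.measure ({t | l < f t} ∩ Ioi 0))
      ≤ (∫⁻ l in Ioi (0:ℝ), νf.measure ({t | l < f t} ∩ Ioi 0)) + ENNReal.ofReal KB := by
    have step : ∀ᵐ l ∂(volume.restrict (Ioi (0:ℝ))),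
        ν.measure ({t | l < f t} ∩ Ioi 0)
          ≤ νf.measure ({t | l < f t} ∩ Ioi 0)
            + (Ioo (0:ℝ) KB).indicator (fun _ => (1:ℝ≥0∞)) l := by
      refine (ae_restrict_iff' measurableSet_Ioi).2 (ae_of_all _ (fun l hl => ?_))
      by_cases hfb : f B ≤ l
      · rw [(hc3 l hl hfb).1]; exact zero_le
      · push_neg at hfb
        rw [Set.indicator_of_mem (mem_Ioo.mpr ⟨hl, lt_of_lt_of_le hfb (le_max_left _ _)⟩)
          (fun _ => (1:ℝ≥0∞))]
        exact hc2 l hl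
    calc (∫⁻ l in Ioi (0:ℝ), ν.measure ({t | l < f t} ∩ Ioi 0))
        ≤ ∫⁻ l in Ioi (0:ℝ), (νf.measure ({t | l < f t} ∩ Ioi 0)
            + (Ioo (0:ℝ) KB).indicator (fun _ => (1:ℝ≥0∞)) l) := lintegral_mono_ae step
      _ = (∫⁻ l in Ioi (0:ℝ), νf.measure ({t | l < f t} ∩ Ioi 0))
            + ∫⁻ l in Ioi (0:ℝ), (Ioo (0:ℝ) KB).indicator (fun _ => (1:ℝ≥0∞)) l :=
          lintegral_add_right _ (measurable_const.indicator measurableSet_Ioo)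
      _ = _ := by rw [hind KB hKB0]
  have e3 : (∫⁻ l in Ioi (0:ℝ), νf.measure ({t | f t < -l} ∩ Ioi 0))
      ≤ (∫⁻ l in Ioi (0:ℝ), ν.measure ({t | f t < -l} ∩ Ioi 0)) + ENNReal.ofReal L1 := by
    have step : ∀ᵐ l ∂(volume.restrict (Ioi (0:ℝ))),
        νf.measure ({t | f t < -l} ∩ Ioi 0)
          ≤ ν.measure ({t | f t < -l} ∩ Ioi 0)
            + (Ioo (0:ℝ) L1).indicator (fun _ => (1:ℝ≥0∞)) l := by
      refine (ae_restrict_iff' measurableSet_Ioi).2 (ae_of_all _ (fun l hl => ?_))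
      by_cases hL : L1 ≤ l
      · rw [hc5 l hL]; simp
      · push_neg at hL
        rw [Set.indicator_of_mem (mem_Ioo.mpr ⟨hl, hL⟩) (fun _ => (1:ℝ≥0∞))]
        exact (hc4 l hl).1
    calc (∫⁻ l in Ioi (0:ℝ), νf.measure ({t | f t < -l} ∩ Ioi 0))
        ≤ ∫⁻ l in Ioi (0:ℝ), (ν.measure ({t | f t < -l} ∩ Ioi 0)
            + (Ioo (0:ℝ) L1).indicator (fun _ => (1:ℝ≥0∞)) l) := lintegral_mono_ae step
      _ = (∫⁻ l in Ioi (0:ℝ), ν.measure ({t | f t < -l} ∩ Ioi 0))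
            + ∫⁻ l in Ioi (0:ℝ), (Ioo (0:ℝ) L1).indicator (fun _ => (1:ℝ≥0∞)) l :=
          lintegral_add_right _ (measurable_const.indicator measurableSet_Ioo)
      _ = _ := by rw [hind L1 hL1nn]
  have e4 : (∫⁻ l in Ioi (0:ℝ), ν.measure ({t | f t < -l} ∩ Ioi 0))
      ≤ (∫⁻ l in Ioi (0:ℝ), νf.measure ({t | f t < -l} ∩ Ioi 0)) + ENNReal.ofReal L1 := by
    have step : ∀ᵐ l ∂(volume.restrict (Ioi (0:ℝ))),
        ν.measure ({t | f t < -l} ∩ Ioi 0)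
          ≤ νf.measure ({t | f t < -l} ∩ Ioi 0)
            + (Ioo (0:ℝ) L1).indicator (fun _ => (1:ℝ≥0∞)) l := by
      refine (ae_restrict_iff' measurableSet_Ioi).2 (ae_of_all _ (fun l hl => ?_))
      by_cases hL : L1 ≤ l
      · rw [hc5 l hL]; simp
      · push_neg at hL
        rw [Set.indicator_of_mem (mem_Ioo.mpr ⟨hl, hL⟩) (fun _ => (1:ℝ≥0∞))]
        exact (hc4 l hl).2
    calc (∫⁻ l in Ioi (0:ℝ), ν.measure ({t | f t < -l} ∩ Ioi 0))
        ≤ ∫⁻ l in Ioi (0:ℝ), (νf.measure ({t | f t < -l} ∩ Ioi 0)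
            + (Ioo (0:ℝ) L1).indicator (fun _ => (1:ℝ≥0∞)) l) := lintegral_mono_ae step
      _ = (∫⁻ l in Ioi (0:ℝ), νf.measure ({t | f t < -l} ∩ Ioi 0))
            + ∫⁻ l in Ioi (0:ℝ), (Ioo (0:ℝ) L1).indicator (fun _ => (1:ℝ≥0∞)) l :=
          lintegral_add_right _ (measurable_const.indicator measurableSet_Ioo)
      _ = _ := by rw [hind L1 hL1nn]
  -- pass to real numbers
  have hr1 := ENNReal.toReal_mono hfinA2 e1
  have hr2 : (∫⁻ l in Ioi (0:ℝ), ν.measure ({t | l < f t} ∩ Ioi 0)).toReal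
      ≤ (∫⁻ l in Ioi (0:ℝ), νf.measure ({t | l < f t} ∩ Ioi 0)).toReal + KB := by
    have h := ENNReal.toReal_mono
      (ENNReal.add_ne_top.2 ⟨hfinA1, ENNReal.ofReal_ne_top⟩) e2
    rwa [ENNReal.toReal_add hfinA1 ENNReal.ofReal_ne_top,
      ENNReal.toReal_ofReal hKB0] at h
  have hr3 : (∫⁻ l in Ioi (0:ℝ), νf.measure ({t | f t < -l} ∩ Ioi 0)).toReal
      ≤ (∫⁻ l in Ioi (0:ℝ), ν.measure ({t | f t < -l} ∩ Ioi 0)).toReal + L1 := by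
    have h := ENNReal.toReal_mono
      (ENNReal.add_ne_top.2 ⟨hfinB2, ENNReal.ofReal_ne_top⟩) e3
    rwa [ENNReal.toReal_add hfinB2 ENNReal.ofReal_ne_top,
      ENNReal.toReal_ofReal hL1nn] at h
  have hr4 : (∫⁻ l in Ioi (0:ℝ), ν.measure ({t | f t < -l} ∩ Ioi 0)).toReal
      ≤ (∫⁻ l in Ioi (0:ℝ), νf.measure ({t | f t < -l} ∩ Ioi 0)).toReal + L1 := by
    have h := ENNReal.toReal_mono
      (ENNReal.add_ne_top.2 ⟨hfinB1, ENNReal.ofReal_ne_top⟩) e4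
    rwa [ENNReal.toReal_add hfinB1 ENNReal.ofReal_ne_top,
      ENNReal.toReal_ofReal hL1nn] at h
  rw [hlay1, hlay2]
  constructor
  · linarith [hr1, hr2, hr3, hr4, hKBb]
  · linarith [hr1, hr2, hr3, hr4]
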